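/- Let n ≥ 1, μ ∈ ℝⁿ, Σ a real symmetric positive definite n×n matrix, Θ a real antisymmetric n×n matrix, 1 ≤ d ≤ n, S a real d×n matrix, and Ψ : ℝ^d → ℂ a Lebesgue-integrable function. Then for every u ∈ ℝⁿ the integral 𝔊_{μ,Σ}(u) := 2 ∫_{ℝ^d} sin(uᵀΘ Sᵀ v) Ψ(v) Φ_{μ,Σ}(u + Sᵀv) dv converges absolutely, |𝔊_{μ,Σ}(u)| ≤ 2 ∫_{ℝ^d} |Ψ(v)| dv for all u, and the function 𝔊_{μ,Σ} belongs to L²(ℝⁿ; ℂ). -/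

import Mathlib

open MeasureTheory Matrix Real

noncomputable section

/-- Quadratic form `uᵀ A u`. -/
def qf {n : ℕ} (A : Matrix (Fin n) (Fin n) ℝ) (u : Fin n → ℝ) : ℝ := u ⬝ᵥ A.mulVec u

/-- Gaussian quasi-characteristic function `Φ_{μ,Σ}(u) = exp(iμᵀu − (1/2)uᵀΣu)`. -/
def qcf {n : ℕ} (μ : Fin n → ℝ) (Sg : Matrix (Fin n) (Fin n) ℝ) (u : Fin n → ℝ) : ℂ :=
  Complex.exp (Complex.I * ((μ ⬝ᵥ u : ℝ) : ℂ) - (1/2 : ℂ) * ((qf Sg u : ℝ) : ℂ))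

/-- `𝔊_{μ,Σ}(u) := 2 ∫ sin(uᵀΘSᵀv) Ψ(v) Φ_{μ,Σ}(u + Sᵀv) dv`. -/
def Gfun {n d : ℕ} (μ : Fin n → ℝ) (Sg Th : Matrix (Fin n) (Fin n) ℝ)
    (S : Matrix (Fin d) (Fin n) ℝ) (Ψ : (Fin d → ℝ) → ℂ) (u : Fin n → ℝ) : ℂ :=
  2 * ∫ v : Fin d → ℝ,
    ((Real.sin (u ⬝ᵥ Th.mulVec (Sᵀ.mulVec v)) : ℝ) : ℂ) * Ψ v *
      qcf μ Sg (u + Sᵀ.mulVec v)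

/-!
The integrand is bounded by `‖Ψ v‖ ‖Φ_{μ,Σ}(u + Sᵀv)‖ ≤ ‖Ψ v‖`, which gives absolute convergence
and the uniform bound. For square integrability, put `g := ‖Φ_{μ,Σ}‖ = exp (-uᵀΣu/2)`, so that
`|𝔊(u)| ≤ 2 ∫ |Ψ(v)| g(u + Sᵀv) dv`. Cauchy–Schwarz for the weight `|Ψ|`, Tonelli and the
translation invariance of Lebesgue measure give `‖𝔊‖₂ ≤ 2 ‖Ψ‖₁ ‖g‖₂` (Young's inequality for
`p = 2`), and `g ∈ L²` because `uᵀΣu ≥ c |u|²` with `c > 0` the minimum of the quadratic form on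
the unit sphere.
-/

open scoped ENNReal

@[fun_prop]
lemma continuous_qf {n : ℕ} (A : Matrix (Fin n) (Fin n) ℝ) : Continuous (qf A) := by
  unfold qf; fun_prop

@[fun_prop]
lemma continuous_qcf {n : ℕ} (μ : Fin n → ℝ) (A : Matrix (Fin n) (Fin n) ℝ) :
    Continuous (qcf μ A) := by
  unfold qcf; fun_prop

lemma qf_smul {n : ℕ} (A : Matrix (Fin n) (Fin n) ℝ) (a : ℝ) (u : Fin n → ℝ) :
    qf A (a • u) = a ^ 2 * qf A u := by
  simp only [qf, mulVec_smul, smul_dotProduct, dotProduct_smul, smul_eq_mul]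
  ring

lemma Matrix.PosSemidef.qf_nonneg {n : ℕ} {A : Matrix (Fin n) (Fin n) ℝ} (hA : A.PosSemidef)
    (u : Fin n → ℝ) : 0 ≤ qf A u := by
  simpa [qf] using hA.dotProduct_mulVec_nonneg u

lemma Matrix.PosDef.exists_pos_mul_sum_sq_le_qf {n : ℕ} {A : Matrix (Fin n) (Fin n) ℝ}
    (hA : A.PosDef) : ∃ c > 0, ∀ u : Fin n → ℝ, c * ∑ i, u i ^ 2 ≤ qf A u := by
  -- `exists_forall_le'` does not need the sphere to be nonempty, so `n = 0` is covered.
  obtain ⟨c, hc, hcq⟩ := (isCompact_sphere (0 : EuclideanSpace ℝ (Fin n)) 1).exists_forall_le'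
    (f := fun x => qf A x.ofLp) (by fun_prop) (a := 0) fun x hx => by
      have hx0 : x.ofLp ≠ 0 := by
        intro h
        simp_all [show x = 0 by simpa using h]
      simpa [qf] using hA.dotProduct_mulVec_pos hx0
  refine ⟨c, hc, fun u => ?_⟩
  set x := WithLp.toLp 2 u
  have hx : ∑ i, u i ^ 2 = ‖x‖ ^ 2 := by simp [x, EuclideanSpace.norm_sq_eq]
  rcases eq_or_ne x 0 with h | h
  · simp [hx, h, hA.posSemidef.qf_nonneg u]
  · have hxn : ‖x‖ ≠ 0 := norm_ne_zero_iff.2 h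
    have := hcq (‖x‖⁻¹ • x) (by simp [norm_smul, hxn])
    rw [WithLp.ofLp_smul, qf_smul] at this
    rw [hx]
    calc c * ‖x‖ ^ 2 ≤ ‖x‖⁻¹ ^ 2 * qf A u * ‖x‖ ^ 2 := by gcongr
      _ = qf A u := by field_simp

lemma Matrix.PosDef.integrable_exp_neg_qf {n : ℕ} {A : Matrix (Fin n) (Fin n) ℝ}
    (hA : A.PosDef) : Integrable fun u => Real.exp (-qf A u) := by
  obtain ⟨c, hc, hcq⟩ := hA.exists_pos_mul_sum_sq_le_qf
  have hprod : Integrable fun u : Fin n → ℝ => ∏ i, Real.exp (-c * u i ^ 2) :=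
    Integrable.fintype_prod (f := fun _ x => Real.exp (-c * x ^ 2))
      fun _ => integrable_exp_neg_mul_sq hc
  refine hprod.mono' (by fun_prop) (ae_of_all _ fun u => ?_)
  rw [Real.norm_of_nonneg (Real.exp_pos _).le, ← Real.exp_sum, Real.exp_le_exp]
  simpa [Finset.mul_sum] using hcq u

lemma norm_qcf {n : ℕ} (μ : Fin n → ℝ) (A : Matrix (Fin n) (Fin n) ℝ) (u : Fin n → ℝ) :
    ‖qcf μ A u‖ = Real.exp (-(qf A u / 2)) := by
  rw [qcf, Complex.norm_exp]
  norm_num [Complex.sub_re, Complex.mul_re]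
  ring_nf

lemma Matrix.PosSemidef.norm_qcf_le_one {n : ℕ} {A : Matrix (Fin n) (Fin n) ℝ}
    (hA : A.PosSemidef) (μ u : Fin n → ℝ) : ‖qcf μ A u‖ ≤ 1 := by
  rw [norm_qcf, Real.exp_le_one_iff, neg_nonpos]
  exact div_nonneg (hA.qf_nonneg u) zero_le_two

lemma Matrix.PosDef.memLp_two_qcf {n : ℕ} {A : Matrix (Fin n) (Fin n) ℝ} (hA : A.PosDef)
    (μ : Fin n → ℝ) : MemLp (qcf μ A) 2 := by
  refine (memLp_two_iff_integrable_sq_norm (by fun_prop)).2 ?_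
  convert hA.integrable_exp_neg_qf using 2 with u
  rw [norm_qcf, ← Real.exp_nat_mul]
  ring_nf

lemma ENNReal.lintegral_mul_sq_le {α : Type*} [MeasurableSpace α] {ν : Measure α}
    {w k : α → ℝ≥0∞} (hw : AEMeasurable w ν) (hk : AEMeasurable k ν) :
    (∫⁻ v, w v * k v ∂ν) ^ 2 ≤ (∫⁻ v, w v ∂ν) * ∫⁻ v, w v * k v ^ 2 ∂ν := by
  have holder := ENNReal.lintegral_mul_norm_pow_le (g := fun v => w v * k v ^ 2)
    (p := 1 / 2) (q := 1 / 2) hw (hw.mul (hk.pow_const 2)) (by norm_num) (by norm_num) (by norm_num)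
  have hsqrt : ∀ a : ℝ≥0∞, (a ^ (1 / 2 : ℝ)) ^ 2 = a := fun a => by
    rw [← ENNReal.rpow_natCast, ← ENNReal.rpow_mul]; norm_num
  have hpt : ∀ v, w v ^ (1 / 2 : ℝ) * (w v * k v ^ 2) ^ (1 / 2 : ℝ) = w v * k v := fun v => by
    rw [ENNReal.mul_rpow_of_nonneg _ _ (by norm_num), ← mul_assoc,
      ← ENNReal.rpow_add_of_nonneg _ _ (by norm_num) (by norm_num), ← ENNReal.rpow_natCast,
      ← ENNReal.rpow_mul]
    norm_num
  simp_rw [hpt] at holder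
  calc (∫⁻ v, w v * k v ∂ν) ^ 2
      ≤ ((∫⁻ v, w v ∂ν) ^ (1 / 2 : ℝ) * (∫⁻ v, w v * k v ^ 2 ∂ν) ^ (1 / 2 : ℝ)) ^ 2 := by gcongr
    _ = (∫⁻ v, w v ∂ν) * ∫⁻ v, w v * k v ^ 2 ∂ν := by rw [mul_pow, hsqrt, hsqrt]

theorem lintegral_sq_lintegral_mul_comp_add_le {E α : Type*} [MeasurableSpace E] [AddGroup E]
    [MeasurableAdd₂ E] [MeasurableSpace α] {μ : Measure E} [μ.IsAddRightInvariant] [SFinite μ]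
    {ν : Measure α} [SFinite ν] {w : α → ℝ≥0∞} (hw : AEMeasurable w ν) {g : E → ℝ≥0∞}
    (hg : Measurable g) {L : α → E} (hL : Measurable L) :
    ∫⁻ u, (∫⁻ v, w v * g (u + L v) ∂ν) ^ 2 ∂μ ≤ (∫⁻ v, w v ∂ν) ^ 2 * ∫⁻ u, g u ^ 2 ∂μ := by
  have hwg : AEMeasurable (Function.uncurry fun u v => w v * g (u + L v) ^ 2) (μ.prod ν) :=
    hw.comp_snd.mul (by fun_prop)
  calc ∫⁻ u, (∫⁻ v, w v * g (u + L v) ∂ν) ^ 2 ∂μ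
      ≤ ∫⁻ u, (∫⁻ v, w v ∂ν) * ∫⁻ v, w v * g (u + L v) ^ 2 ∂ν ∂μ :=
        lintegral_mono fun u =>
          ENNReal.lintegral_mul_sq_le hw (hg.comp (measurable_const.add hL)).aemeasurable
    _ = (∫⁻ v, w v ∂ν) * ∫⁻ v, w v * ∫⁻ u, g (u + L v) ^ 2 ∂μ ∂ν := by
        rw [lintegral_const_mul'' _ hwg.lintegral_prod_right, lintegral_lintegral_swap hwg]
        exact congrArg _ (lintegral_congr fun v => lintegral_const_mul _ (by fun_prop))
    _ = (∫⁻ v, w v ∂ν) ^ 2 * ∫⁻ u, g u ^ 2 ∂μ := by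
        simp_rw [lintegral_add_right_eq_self (fun u => g u ^ 2), lintegral_mul_const'' _ hw, sq,
          mul_assoc]

section Integrand

variable {n d : ℕ} (μ : Fin n → ℝ) (Sg Th : Matrix (Fin n) (Fin n) ℝ)
  (S : Matrix (Fin d) (Fin n) ℝ) (Ψ : (Fin d → ℝ) → ℂ)

def gfunIntegrand (u : Fin n → ℝ) (v : Fin d → ℝ) : ℂ :=
  ((Real.sin (u ⬝ᵥ Th.mulVec (Sᵀ.mulVec v)) : ℝ) : ℂ) * Ψ v * qcf μ Sg (u + Sᵀ.mulVec v)

lemma gfun_eq_integral (u : Fin n → ℝ) :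
    Gfun μ Sg Th S Ψ u = 2 * ∫ v, gfunIntegrand μ Sg Th S Ψ u v := rfl

lemma norm_gfunIntegrand_le (u : Fin n → ℝ) (v : Fin d → ℝ) :
    ‖gfunIntegrand μ Sg Th S Ψ u v‖ ≤ ‖Ψ v‖ * ‖qcf μ Sg (u + Sᵀ.mulVec v)‖ := by
  rw [gfunIntegrand, norm_mul, norm_mul, Complex.norm_real]
  gcongr
  exact mul_le_of_le_one_left (norm_nonneg _) (Real.abs_sin_le_one _)

lemma enorm_gfun_le (u : Fin n → ℝ) :
    ‖Gfun μ Sg Th S Ψ u‖ₑ ≤ 2 * ∫⁻ v, ‖Ψ v‖ₑ * ‖qcf μ Sg (u + Sᵀ.mulVec v)‖ₑ := by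
  rw [gfun_eq_integral, enorm_mul]
  gcongr
  · simp [enorm_eq_nnnorm]
  refine (enorm_integral_le_lintegral_enorm (gfunIntegrand μ Sg Th S Ψ u)).trans
    (lintegral_mono fun v => ?_)
  rw [← enorm_mul, enorm_le_iff_norm_le, norm_mul]
  exact norm_gfunIntegrand_le μ Sg Th S Ψ u v

variable {Ψ}

lemma aestronglyMeasurable_gfunIntegrand (hΨ : AEStronglyMeasurable Ψ) (u : Fin n → ℝ) :
    AEStronglyMeasurable (gfunIntegrand μ Sg Th S Ψ u) := by
  unfold gfunIntegrand
  fun_prop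

lemma aestronglyMeasurable_gfun (hΨ : AEStronglyMeasurable Ψ) :
    AEStronglyMeasurable (Gfun μ Sg Th S Ψ) := by
  have h : AEStronglyMeasurable (Function.uncurry (gfunIntegrand μ Sg Th S Ψ))
      (volume.prod volume) := by
    refine ((Continuous.aestronglyMeasurable ?_).mul hΨ.comp_snd).mul
      (Continuous.aestronglyMeasurable ?_) <;> fun_prop
  exact h.integral_prod_right'.const_mul 2

theorem memLp_two_gfun (hSg : Sg.PosDef) (hΨ : Integrable Ψ) :
    MemLp (Gfun μ Sg Th S Ψ) 2 := by
  refine ⟨aestronglyMeasurable_gfun μ Sg Th S hΨ.1, ?_⟩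
  have hqcf := (hSg.memLp_two_qcf μ).2
  rw [eLpNorm_lt_top_iff_lintegral_rpow_enorm_lt_top two_ne_zero ENNReal.ofNat_ne_top] at hqcf ⊢
  simp only [ENNReal.toReal_ofNat, ENNReal.rpow_two] at hqcf ⊢
  calc ∫⁻ u, ‖Gfun μ Sg Th S Ψ u‖ₑ ^ 2
      ≤ ∫⁻ u, 2 ^ 2 * (∫⁻ v, ‖Ψ v‖ₑ * ‖qcf μ Sg (u + Sᵀ.mulVec v)‖ₑ) ^ 2 :=
        lintegral_mono fun u => (pow_le_pow_left' (enorm_gfun_le μ Sg Th S Ψ u) 2).trans_eq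
          (mul_pow _ _ _)
    _ = 2 ^ 2 * ∫⁻ u, (∫⁻ v, ‖Ψ v‖ₑ * ‖qcf μ Sg (u + Sᵀ.mulVec v)‖ₑ) ^ 2 :=
        lintegral_const_mul' _ _ (by simp)
    _ ≤ 2 ^ 2 * ((∫⁻ v, ‖Ψ v‖ₑ) ^ 2 * ∫⁻ u, ‖qcf μ Sg u‖ₑ ^ 2) := by
        gcongr
        exact lintegral_sq_lintegral_mul_comp_add_le hΨ.1.enorm
          (continuous_qcf μ Sg).enorm.measurable (by fun_prop)
    _ < ⊤ := by
        have hΨ_fin : ∫⁻ v, ‖Ψ v‖ₑ < ⊤ := hΨ.2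
        finiteness

end Integrand

theorem stmt14_general {n d : ℕ}
    (μ : Fin n → ℝ) (Sg : Matrix (Fin n) (Fin n) ℝ) (hpos : Sg.PosDef)
    (Th : Matrix (Fin n) (Fin n) ℝ)
    (S : Matrix (Fin d) (Fin n) ℝ) (Ψ : (Fin d → ℝ) → ℂ) (hΨ : Integrable Ψ) :
    (∀ u : Fin n → ℝ,
      Integrable (fun v : Fin d → ℝ =>
        ((Real.sin (u ⬝ᵥ Th.mulVec (Sᵀ.mulVec v)) : ℝ) : ℂ) * Ψ v *
          qcf μ Sg (u + Sᵀ.mulVec v))) ∧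
    (∀ u : Fin n → ℝ,
      ‖Gfun μ Sg Th S Ψ u‖ ≤ 2 * ∫ v : Fin d → ℝ, ‖Ψ v‖) ∧
    MemLp (Gfun μ Sg Th S Ψ) 2 (volume : Measure (Fin n → ℝ)) := by
  have hbound (u : Fin n → ℝ) (v : Fin d → ℝ) : ‖gfunIntegrand μ Sg Th S Ψ u v‖ ≤ ‖Ψ v‖ :=
    (norm_gfunIntegrand_le μ Sg Th S Ψ u v).trans
      (mul_le_of_le_one_right (norm_nonneg _) (hpos.posSemidef.norm_qcf_le_one μ _))
  refine ⟨fun u => hΨ.norm.mono' (aestronglyMeasurable_gfunIntegrand μ Sg Th S hΨ.1 u)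
      (ae_of_all _ (hbound u)), fun u => ?_, memLp_two_gfun μ Sg Th S hpos hΨ⟩
  rw [gfun_eq_integral, norm_mul, Complex.norm_two]
  gcongr
  exact norm_integral_le_of_norm_le hΨ.norm (ae_of_all _ (hbound u))

/-- for integrable `Ψ`, the integral defining `𝔊_{μ,Σ}(u)` converges absolutely
for every `u`, `|𝔊_{μ,Σ}(u)| ≤ 2 ∫ |Ψ(v)| dv`, and `𝔊_{μ,Σ} ∈ L²(ℝⁿ;ℂ)`. -/
theorem stmt14 {n d : ℕ} (hn : 1 ≤ n) (hd : 1 ≤ d) (hdn : d ≤ n)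
    (μ : Fin n → ℝ) (Sg : Matrix (Fin n) (Fin n) ℝ) (hsymm : Sg.IsSymm) (hpos : Sg.PosDef)
    (Th : Matrix (Fin n) (Fin n) ℝ) (hanti : Thᵀ = -Th)
    (S : Matrix (Fin d) (Fin n) ℝ) (Ψ : (Fin d → ℝ) → ℂ) (hΨ : Integrable Ψ) :
    (∀ u : Fin n → ℝ,
      Integrable (fun v : Fin d → ℝ =>
        ((Real.sin (u ⬝ᵥ Th.mulVec (Sᵀ.mulVec v)) : ℝ) : ℂ) * Ψ v *
          qcf μ Sg (u + Sᵀ.mulVec v))) ∧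
    (∀ u : Fin n → ℝ,
      ‖Gfun μ Sg Th S Ψ u‖ ≤ 2 * ∫ v : Fin d → ℝ, ‖Ψ v‖) ∧
    MemLp (Gfun μ Sg Th S Ψ) 2 (volume : Measure (Fin n → ℝ)) :=
  stmt14_general μ Sg hpos Th S Ψ hΨ
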